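/- For every graph G, γ_g(G−e) ≥ ⌈(γ_g(G)+1)/2⌉ for any edge e of G. In particular, if γ_g(G) ≥ 2 then γ_g(G−e) ≥ 2, and if γ_g(G) ≥ 4 then γ_g(G−e) ≥ 3. -/

import Mathlib

/-!
Both game values are compared with the residual domination number `γ(G | S)` of the
position. Dominator can always play a vertex of a minimum dominating set of the undominated
vertices, so `γ_g ≤ 2γ - 1`; the moves of any play form a dominating set, so `γ ≤ γ_g`.
Since deleting an edge cannot decrease `γ`,
`γ_g(G) ≤ 2γ(G) - 1 < 2γ(G - e) ≤ 2γ_g(G - e)`, which gives all three bounds.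
-/

open Classical

noncomputable section

namespace DomGame

variable {V : Type*} [Fintype V]

/-- Closed neighborhood of `v` as a `Finset`. -/
noncomputable def N (G : SimpleGraph V) (v : V) : Finset V :=
  Finset.univ.filter (fun u => G.Adj v u ∨ u = v)

/-- Legal moves given the set `S` of already dominated vertices. -/
noncomputable def moves (G : SimpleGraph V) (S : Finset V) : Finset V :=
  Finset.univ.filter (fun v => ¬ N G v ⊆ S)

lemma card_lt {G : SimpleGraph V} {S : Finset V} (v : V) (hv : v ∈ moves G S) :
    (Finset.univ \ (S ∪ N G v)).card < (Finset.univ \ S).card := by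
  simp only [moves, Finset.mem_filter] at hv
  obtain ⟨u, hu, hus⟩ := Finset.not_subset.mp hv.2
  apply Finset.card_lt_card
  refine ⟨Finset.sdiff_subset_sdiff (le_refl _) Finset.subset_union_left, ?_⟩
  intro hsub
  have := hsub (Finset.mem_sdiff.mpr ⟨Finset.mem_univ u, hus⟩)
  rw [Finset.mem_sdiff, Finset.mem_union] at this
  exact this.2 (Or.inr hu)

mutual
/-- Number of moves with optimal play when it is Dominator's turn and
`S` is the set of already dominated vertices. -/
noncomputable def gameD (G : SimpleGraph V) (S : Finset V) : ℕ :=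
  if h : (moves G S).Nonempty then
    1 + (moves G S).attach.inf' (by simpa using h)
      (fun v => gameS G (S ∪ N G v.1))
  else 0
termination_by (Finset.univ \ S).card
decreasing_by exact card_lt v.1 v.2

/-- Number of moves with optimal play when it is Staller's turn. -/
noncomputable def gameS (G : SimpleGraph V) (S : Finset V) : ℕ :=
  if h : (moves G S).Nonempty then
    1 + (moves G S).attach.sup' (by simpa using h)
      (fun v => gameD G (S ∪ N G v.1))
  else 0
termination_by (Finset.univ \ S).card
decreasing_by exact card_lt v.1 v.2
end

/-- The (Dominator-start) game domination number. -/
noncomputable def gammaG (G : SimpleGraph V) : ℕ := gameD G ∅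

/-- The Staller-start game domination number. -/
noncomputable def gammaG' (G : SimpleGraph V) : ℕ := gameS G ∅

lemma mem_N_self (G : SimpleGraph V) (v : V) : v ∈ N G v := by
  simp [N]

lemma N_mono {G G' : SimpleGraph V} (h : G' ≤ G) (v : V) : N G' v ⊆ N G v := by
  intro u
  simp only [N, Finset.mem_filter, Finset.mem_univ, true_and]
  exact Or.imp_left (@h v u)

lemma mem_moves {G : SimpleGraph V} {S : Finset V} {v : V} :
    v ∈ moves G S ↔ ∃ u ∈ N G v, u ∉ S := by
  simp [moves, Finset.not_subset]

lemma moves_nonempty_iff {G : SimpleGraph V} {S : Finset V} :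
    (moves G S).Nonempty ↔ ∃ u, u ∉ S := by
  simp only [Finset.Nonempty, mem_moves]
  exact ⟨fun ⟨_, u, _, hu⟩ => ⟨u, hu⟩,
    fun ⟨u, hu⟩ => ⟨u, u, mem_N_self G u, hu⟩⟩

section Game

variable {G : SimpleGraph V} {S : Finset V}

lemma gameD_eq_zero (h : ¬ (moves G S).Nonempty) : gameD G S = 0 := by
  rw [gameD, dif_neg h]

lemma gameS_eq_zero (h : ¬ (moves G S).Nonempty) : gameS G S = 0 := by
  rw [gameS, dif_neg h]

lemma gameD_le_one_add_gameS {v : V} (hv : v ∈ moves G S) :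
    gameD G S ≤ 1 + gameS G (S ∪ N G v) := by
  rw [gameD, dif_pos ⟨v, hv⟩]
  exact Nat.add_le_add_left (Finset.inf'_le _ (Finset.mem_attach _ ⟨v, hv⟩)) 1

lemma exists_gameD_eq_one_add_gameS (h : (moves G S).Nonempty) :
    ∃ v ∈ moves G S, gameD G S = 1 + gameS G (S ∪ N G v) := by
  rw [gameD, dif_pos h]
  obtain ⟨v, -, hv⟩ := Finset.exists_mem_eq_inf' h.attach
    (fun v : moves G S => gameS G (S ∪ N G v.1))
  exact ⟨v.1, v.2, by rw [hv]⟩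

lemma one_add_gameD_le_gameS {v : V} (hv : v ∈ moves G S) :
    1 + gameD G (S ∪ N G v) ≤ gameS G S := by
  rw [gameS, dif_pos ⟨v, hv⟩]
  exact Nat.add_le_add_left (Finset.le_sup' (fun v : moves G S => gameD G (S ∪ N G v.1))
    (Finset.mem_attach _ ⟨v, hv⟩)) 1

lemma gameS_le_one_add {k : ℕ} (h : ∀ v ∈ moves G S, gameD G (S ∪ N G v) ≤ k) :
    gameS G S ≤ 1 + k := by
  rw [gameS]
  split_ifs
  · exact Nat.add_le_add_left (Finset.sup'_le _ _ fun v _ => h v.1 v.2) 1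
  · exact Nat.zero_le _

end Game

def DominatesOutside (G : SimpleGraph V) (S T : Finset V) : Prop :=
  ∀ u ∉ S, ∃ v ∈ T, u ∈ N G v

lemma exists_dominatesOutside (G : SimpleGraph V) (S : Finset V) :
    ∃ k, ∃ T : Finset V, T.card = k ∧ DominatesOutside G S T :=
  ⟨_, Finset.univ, rfl, fun u _ => ⟨u, Finset.mem_univ u, mem_N_self G u⟩⟩

/-- The residual domination number `γ(G | S)`; `domNum G ∅` is `γ(G)`. -/
def domNum (G : SimpleGraph V) (S : Finset V) : ℕ :=
  Nat.find (exists_dominatesOutside G S)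

section DomNum

variable {G : SimpleGraph V} {S : Finset V}

lemma exists_card_eq_domNum (G : SimpleGraph V) (S : Finset V) :
    ∃ T : Finset V, T.card = domNum G S ∧ DominatesOutside G S T :=
  Nat.find_spec (exists_dominatesOutside G S)

lemma domNum_le_card {T : Finset V} (h : DominatesOutside G S T) : domNum G S ≤ T.card :=
  Nat.find_min' _ ⟨T, rfl, h⟩

lemma domNum_eq_zero (h : ¬ (moves G S).Nonempty) : domNum G S = 0 := by
  simp only [moves_nonempty_iff, not_exists, not_not] at h
  exact Nat.eq_zero_of_le_zero (domNum_le_card (T := ∅) fun u hu => absurd (h u) hu)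

lemma domNum_pos (h : (moves G S).Nonempty) : 0 < domNum G S := by
  obtain ⟨u, hu⟩ := moves_nonempty_iff.mp h
  obtain ⟨T, hT, hdom⟩ := exists_card_eq_domNum G S
  obtain ⟨v, hv, -⟩ := hdom u hu
  exact hT ▸ Finset.card_pos.mpr ⟨v, hv⟩

lemma domNum_le_domNum_of_subset {S' : Finset V} (h : S ⊆ S') : domNum G S' ≤ domNum G S := by
  obtain ⟨T, hT, hdom⟩ := exists_card_eq_domNum G S
  exact hT ▸ domNum_le_card fun u hu => hdom u fun huS => hu (h huS)

lemma domNum_le_domNum_of_le {G' : SimpleGraph V} (h : G' ≤ G) (S : Finset V) :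
    domNum G S ≤ domNum G' S := by
  obtain ⟨T, hT, hdom⟩ := exists_card_eq_domNum G' S
  refine hT ▸ domNum_le_card fun u hu => ?_
  obtain ⟨v, hv, huv⟩ := hdom u hu
  exact ⟨v, hv, N_mono h v huv⟩

lemma domNum_le_succ_domNum_union (v : V) : domNum G S ≤ domNum G (S ∪ N G v) + 1 := by
  obtain ⟨T, hT, hdom⟩ := exists_card_eq_domNum G (S ∪ N G v)
  refine (domNum_le_card (T := insert v T) fun u hu => ?_).trans
    (hT ▸ Finset.card_insert_le v T)
  by_cases huv : u ∈ N G v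
  · exact ⟨v, Finset.mem_insert_self v T, huv⟩
  · obtain ⟨w, hw, huw⟩ := hdom u (by simp [hu, huv])
    exact ⟨w, Finset.mem_insert_of_mem hw, huw⟩

lemma exists_domNum_union_lt (h : (moves G S).Nonempty) :
    ∃ v ∈ moves G S, domNum G (S ∪ N G v) < domNum G S := by
  obtain ⟨u, hu⟩ := moves_nonempty_iff.mp h
  obtain ⟨T, hT, hdom⟩ := exists_card_eq_domNum G S
  obtain ⟨v, hv, huv⟩ := hdom u hu
  refine ⟨v, mem_moves.mpr ⟨u, huv, hu⟩, ?_⟩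
  calc domNum G (S ∪ N G v) ≤ (T.erase v).card := domNum_le_card fun w hw => by
        obtain ⟨x, hx, hwx⟩ := hdom w fun hwS => hw (Finset.mem_union_left _ hwS)
        refine ⟨x, Finset.mem_erase.mpr ⟨?_, hx⟩, hwx⟩
        rintro rfl
        exact hw (Finset.mem_union_right _ hwx)
    _ < domNum G S := hT ▸ Finset.card_erase_lt_of_mem hv

end DomNum

section Bounds

variable (G : SimpleGraph V)

mutual

theorem gameD_le_two_mul_domNum_sub_one (S : Finset V) :
    gameD G S ≤ 2 * domNum G S - 1 := by
  by_cases h : (moves G S).Nonempty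
  · obtain ⟨v, hv, hlt⟩ := exists_domNum_union_lt h
    have := gameS_le_two_mul_domNum (S ∪ N G v)
    have := gameD_le_one_add_gameS hv
    omega
  · rw [gameD_eq_zero h]
    exact Nat.zero_le _
termination_by (Finset.univ \ S).card
decreasing_by exact card_lt v hv

theorem gameS_le_two_mul_domNum (S : Finset V) : gameS G S ≤ 2 * domNum G S := by
  by_cases h : (moves G S).Nonempty
  · have := domNum_pos h
    have := gameS_le_one_add (k := 2 * domNum G S - 1) fun v hv =>
      (gameD_le_two_mul_domNum_sub_one (S ∪ N G v)).trans <| by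
        have := domNum_le_domNum_of_subset (G := G) (Finset.subset_union_left : S ⊆ S ∪ N G v)
        omega
    omega
  · rw [gameS_eq_zero h]
    exact Nat.zero_le _
termination_by (Finset.univ \ S).card
decreasing_by exact card_lt v hv

theorem domNum_le_gameD (S : Finset V) : domNum G S ≤ gameD G S := by
  by_cases h : (moves G S).Nonempty
  · obtain ⟨v, hv, hD⟩ := exists_gameD_eq_one_add_gameS h
    have := domNum_le_succ_domNum_union (G := G) (S := S) v
    have := domNum_le_gameS (S ∪ N G v)
    omega
  · rw [domNum_eq_zero h]
    exact Nat.zero_le _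
termination_by (Finset.univ \ S).card
decreasing_by exact card_lt v hv

theorem domNum_le_gameS (S : Finset V) : domNum G S ≤ gameS G S := by
  by_cases h : (moves G S).Nonempty
  · obtain ⟨v, hv⟩ := h
    have := domNum_le_succ_domNum_union (G := G) (S := S) v
    have := domNum_le_gameD (S ∪ N G v)
    have := one_add_gameD_le_gameS hv
    omega
  · rw [domNum_eq_zero h]
    exact Nat.zero_le _
termination_by (Finset.univ \ S).card
decreasing_by exact card_lt v hv

end

end Bounds

theorem gammaG_lt_two_mul_gammaG_of_le [Nonempty V] {G G' : SimpleGraph V} (h : G' ≤ G) :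
    gammaG G < 2 * gammaG G' := by
  have hpos : 0 < domNum G ∅ :=
    domNum_pos (moves_nonempty_iff.mpr ⟨Classical.arbitrary V, Finset.notMem_empty _⟩)
  have := gameD_le_two_mul_domNum_sub_one G ∅
  have := domNum_le_domNum_of_le h ∅
  have := domNum_le_gameD G' ∅
  unfold gammaG
  omega

end DomGame

open DomGame in
/-- `γ_g(G−e) ≥ ⌈(γ_g(G)+1)/2⌉`; in particular `γ_g(G) ≥ 2` implies
`γ_g(G−e) ≥ 2`, and `γ_g(G) ≥ 4` implies `γ_g(G−e) ≥ 3`. -/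
theorem gameD_edge_removal_lower {V : Type*} [Fintype V] (G : SimpleGraph V)
    (e : Sym2 V) (he : e ∈ G.edgeSet) :
    (gammaG G + 2) / 2 ≤ gammaG (G.deleteEdges {e}) ∧
    (2 ≤ gammaG G → 2 ≤ gammaG (G.deleteEdges {e})) ∧
    (4 ≤ gammaG G → 3 ≤ gammaG (G.deleteEdges {e})) := by
  have : Nonempty V := e.inductionOn fun a _ => ⟨a⟩
  have := gammaG_lt_two_mul_gammaG_of_le (G.deleteEdges_le {e})
  omega
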